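/- arXiv:2107.08285 — 2 statements merged into one kernel-verified Lean document; each statement's English description precedes it below -/
import Mathlib

section
/- Improvement under average RKL reduction: for any policies π_old, π_new on a finite MDP and τ > 0, η_τ(π_new) − η_τ(π_old) = (τ/(1−γ)) · E_{S∼d^{π_new}}[ KL(π_old(·|S) ‖ B_τ Q_τ^{π_old}(S,·)) − KL(π_new(·|S) ‖ B_τ Q_τ^{π_old}(S,·)) ]. Consequently η_τ(π_new) ≥ η_τ(π_old) if and only if the average RKL reduction is nonnegative. -/
open Finset

noncomputable def boltzmann {S A : Type*} [Fintype A] (Q : S → A → ℝ) (τ : ℝ) (s : S) (a : A) : ℝ :=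
  Real.exp (Q s a / τ) / ∑ b, Real.exp (Q s b / τ)

/-- Improvement under average RKL reduction: with `B = B_τ Q_τ^{π_old}` the Boltzmann
policy over the old soft action-values,
`η_τ(π_new) − η_τ(π_old) = (τ/(1−γ)) E_{S∼d^{π_new}}[KL(π_old‖B)(S) − KL(π_new‖B)(S)]`,
and hence `η_τ(π_new) ≥ η_τ(π_old)` iff the average RKL reduction is nonnegative. -/
theorem improvement_under_average_rkl_reduction
    {S A : Type*} [Fintype S] [Fintype A] [Nonempty S] [Nonempty A]
    (P : S → A → S → ℝ) (hP0 : ∀ s a s', 0 ≤ P s a s') (hP1 : ∀ s a, ∑ s', P s a s' = 1)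
    (r : S → A → ℝ) (γ : ℝ) (hγ0 : 0 ≤ γ) (hγ1 : γ < 1)
    (ρ : S → ℝ) (hρ0 : ∀ s, 0 ≤ ρ s) (hρ1 : ∑ s, ρ s = 1)
    (τ : ℝ) (hτ : 0 < τ)
    (πold πnew : S → A → ℝ)
    (hπold : ∀ s a, 0 < πold s a) (hπold1 : ∀ s, ∑ a, πold s a = 1)
    (hπnew : ∀ s a, 0 < πnew s a) (hπnew1 : ∀ s, ∑ a, πnew s a = 1)
    (Vold : S → ℝ) (Qold : S → A → ℝ)
    (hQold : ∀ s a, Qold s a = r s a + γ * ∑ s', P s a s' * Vold s')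
    (hVold : ∀ s, Vold s = ∑ a, πold s a * (Qold s a - τ * Real.log (πold s a)))
    (Vnew : S → ℝ)
    (hVnew : ∀ s, Vnew s = ∑ a, πnew s a *
      (r s a + γ * (∑ s', P s a s' * Vnew s') - τ * Real.log (πnew s a)))
    (d : S → ℝ)
    (hd : ∀ s, d s = (1 - γ) * ρ s + γ * ∑ s', ∑ a, d s' * (πnew s' a * P s' a s)) :
    ((∑ s, ρ s * Vnew s) - (∑ s, ρ s * Vold s) =
      (τ / (1 - γ)) * ∑ s, d s *
        ((∑ a, πold s a * Real.log (πold s a / boltzmann Qold τ s a))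
          - (∑ a, πnew s a * Real.log (πnew s a / boltzmann Qold τ s a)))) ∧
    ((∑ s, ρ s * Vold s) ≤ (∑ s, ρ s * Vnew s) ↔
      0 ≤ ∑ s, d s *
        ((∑ a, πold s a * Real.log (πold s a / boltzmann Qold τ s a))
          - (∑ a, πnew s a * Real.log (πnew s a / boltzmann Qold τ s a)))) := by
  have h1γ : (0:ℝ) < 1 - γ := by linarith
  set f : S → ℝ := fun s => Vnew s - Vold s with hf
  set g : S → ℝ := fun s =>
    (∑ a, πnew s a * (Qold s a - τ * Real.log (πnew s a))) - Vold s with hg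
  -- positivity of partition function
  have hZ : ∀ s, 0 < ∑ b, Real.exp (Qold s b / τ) := fun s =>
    Finset.sum_pos (fun b _ => Real.exp_pos _) Finset.univ_nonempty
  have hlogB : ∀ s a, Real.log (boltzmann Qold τ s a)
      = Qold s a / τ - Real.log (∑ b, Real.exp (Qold s b / τ)) := fun s a => by
    rw [boltzmann, Real.log_div (Real.exp_ne_zero _) (hZ s).ne', Real.log_exp]
  -- KL expansion for a policy
  have hKL : ∀ (π : S → A → ℝ), (∀ s a, 0 < π s a) → (∀ s, ∑ a, π s a = 1) → ∀ s,
      ∑ a, π s a * Real.log (π s a / boltzmann Qold τ s a)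
        = (∑ a, π s a * Real.log (π s a)) - (∑ a, π s a * Qold s a) / τ
          + Real.log (∑ b, Real.exp (Qold s b / τ)) := by
    intro π hπ hπ1 s
    have hBpos : ∀ a, 0 < boltzmann Qold τ s a := fun a => div_pos (Real.exp_pos _) (hZ s)
    have key : ∀ a, π s a * Real.log (π s a / boltzmann Qold τ s a)
        = π s a * Real.log (π s a) - π s a * Qold s a / τ
          + π s a * Real.log (∑ b, Real.exp (Qold s b / τ)) := by
      intro a
      rw [Real.log_div (hπ s a).ne' (hBpos a).ne', hlogB]
      ring
    rw [Finset.sum_congr rfl (fun a _ => key a), Finset.sum_add_distrib,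
      Finset.sum_sub_distrib, ← Finset.sum_mul, hπ1, one_mul, ← Finset.sum_div]
  -- per-state identity : τ * (KLold - KLnew) = g s
  have hstate : ∀ s,
      τ * ((∑ a, πold s a * Real.log (πold s a / boltzmann Qold τ s a))
        - (∑ a, πnew s a * Real.log (πnew s a / boltzmann Qold τ s a))) = g s := by
    intro s
    rw [hKL πold hπold hπold1 s, hKL πnew hπnew hπnew1 s]
    have hVo : Vold s = (∑ a, πold s a * Qold s a)
        - τ * ∑ a, πold s a * Real.log (πold s a) := by
      rw [hVold s, Finset.mul_sum, ← Finset.sum_sub_distrib]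
      exact Finset.sum_congr rfl (fun a _ => by ring)
    have hgs : g s = (∑ a, πnew s a * Qold s a)
        - τ * (∑ a, πnew s a * Real.log (πnew s a)) - Vold s := by
      rw [hg]
      simp only
      rw [Finset.mul_sum, ← Finset.sum_sub_distrib]
      congr 1
      exact Finset.sum_congr rfl (fun a _ => by ring)
    rw [hgs, hVo]
    field_simp
    ring
  -- per-state Bellman-style identity for g
  have hA : ∀ s, g s = f s - γ * ∑ a, πnew s a * ∑ s', P s a s' * f s' := by
    intro s
    have key : ∀ a, πnew s a * (Qold s a - τ * Real.log (πnew s a))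
        = πnew s a * (r s a + γ * (∑ s', P s a s' * Vnew s') - τ * Real.log (πnew s a))
          - γ * (πnew s a * ∑ s', P s a s' * f s') := by
      intro a
      have hdiff : ∑ s', P s a s' * f s'
          = (∑ s', P s a s' * Vnew s') - ∑ s', P s a s' * Vold s' := by
        rw [← Finset.sum_sub_distrib]
        exact Finset.sum_congr rfl (fun s' _ => by simp [hf]; ring)
      rw [hQold, hdiff]; ring
    have : (∑ a, πnew s a * (Qold s a - τ * Real.log (πnew s a)))
        = Vnew s - γ * ∑ a, πnew s a * ∑ s', P s a s' * f s' := by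
      rw [Finset.sum_congr rfl (fun a _ => key a), Finset.sum_sub_distrib, ← hVnew s,
        ← Finset.mul_sum]
    rw [hg]; simp only; rw [this, hf]; ring
  -- weighted sum identity
  have hsum : ∑ s, d s * g s = (1 - γ) * ∑ s, ρ s * f s := by
    have h1 : ∀ s, ∑ a, ∑ s', d s * πnew s a * P s a s' * f s'
        = d s * ∑ a, πnew s a * ∑ s', P s a s' * f s' := by
      intro s
      rw [Finset.mul_sum]
      refine Finset.sum_congr rfl (fun a _ => ?_)
      rw [Finset.mul_sum, ← Finset.mul_sum]
      rw [Finset.mul_sum, Finset.mul_sum]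
      exact Finset.sum_congr rfl (fun s' _ => by ring)
    have step1 : ∑ s, d s * g s
        = (∑ s, d s * f s) - γ * ∑ s, ∑ a, ∑ s', d s * πnew s a * P s a s' * f s' := by
      rw [Finset.mul_sum, ← Finset.sum_sub_distrib]
      exact Finset.sum_congr rfl (fun s _ => by rw [hA s, h1 s]; ring)
    have step2 : ∑ s, d s * f s
        = (1 - γ) * (∑ s, ρ s * f s)
          + γ * ∑ s, ∑ a, ∑ s', d s * πnew s a * P s a s' * f s' := by
      calc ∑ s, d s * f s
          = ∑ s, ((1 - γ) * (ρ s * f s)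
              + γ * ∑ s', ∑ a, d s' * πnew s' a * P s' a s * f s) := by
            refine Finset.sum_congr rfl (fun s _ => ?_)
            have h2 : (∑ s', ∑ a, d s' * (πnew s' a * P s' a s)) * f s
                = ∑ s', ∑ a, d s' * πnew s' a * P s' a s * f s := by
              rw [Finset.sum_mul]
              refine Finset.sum_congr rfl (fun s' _ => ?_)
              rw [Finset.sum_mul]
              exact Finset.sum_congr rfl (fun a _ => by ring)
            rw [hd s, add_mul, mul_assoc γ, h2]
            ring
        _ = (1 - γ) * (∑ s, ρ s * f s)
              + γ * ∑ s, ∑ s', ∑ a, d s' * πnew s' a * P s' a s * f s := by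
            rw [Finset.sum_add_distrib, ← Finset.mul_sum, ← Finset.mul_sum]
        _ = (1 - γ) * (∑ s, ρ s * f s)
              + γ * ∑ s', ∑ s, ∑ a, d s' * πnew s' a * P s' a s * f s := by
            rw [Finset.sum_comm]
        _ = (1 - γ) * (∑ s, ρ s * f s)
              + γ * ∑ s, ∑ a, ∑ s', d s * πnew s a * P s a s' * f s' := by
            congr 1
            congr 1
            exact Finset.sum_congr rfl (fun s' _ => Finset.sum_comm)
    rw [step1, step2]; ring
  -- conclude
  have hmain : (∑ s, ρ s * Vnew s) - (∑ s, ρ s * Vold s)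
      = (τ / (1 - γ)) * ∑ s, d s *
        ((∑ a, πold s a * Real.log (πold s a / boltzmann Qold τ s a))
          - (∑ a, πnew s a * Real.log (πnew s a / boltzmann Qold τ s a))) := by
    have hLHS : (∑ s, ρ s * Vnew s) - (∑ s, ρ s * Vold s) = ∑ s, ρ s * f s := by
      rw [← Finset.sum_sub_distrib]
      exact Finset.sum_congr rfl (fun s _ => by simp [hf]; ring)
    have hRHS : τ * ∑ s, d s *
        ((∑ a, πold s a * Real.log (πold s a / boltzmann Qold τ s a))
          - (∑ a, πnew s a * Real.log (πnew s a / boltzmann Qold τ s a)))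
        = ∑ s, d s * g s := by
      rw [Finset.mul_sum]
      exact Finset.sum_congr rfl (fun s _ => by rw [← hstate s]; ring)
    rw [hLHS]
    have := hsum
    rw [← hRHS] at this
    field_simp
    linarith [this]
  refine ⟨hmain, ?_⟩
  rw [← sub_nonneg, hmain]
  constructor
  · intro h
    by_contra hneg
    push_neg at hneg
    nlinarith [div_pos hτ h1γ]
  · intro h
    exact mul_nonneg (le_of_lt (div_pos hτ h1γ)) h
end

section
/- Monotone improvement from per-state RKL reduction (soft policy improvement): in a finite entropy-regularized MDP with τ > 0, if KL(π_new(·|s) ‖ B_τQ_τ^{π_old}(s,·)) ≤ KL(π_old(·|s) ‖ B_τQ_τ^{π_old}(s,·)) for every state s, then Q_τ^{π_new}(s,a) ≥ Q_τ^{π_old}(s,a) for all state-action pairs (s,a). -/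
open Finset

/-- Soft policy improvement from per-state RKL reduction: if
`KL(π_new(·|s) ‖ B_τQ_τ^{π_old}(s,·)) ≤ KL(π_old(·|s) ‖ B_τQ_τ^{π_old}(s,·))` for
every state `s`, then `Q_τ^{π_new}(s,a) ≥ Q_τ^{π_old}(s,a)` for all `(s,a)`. -/
theorem soft_policy_improvement_rkl
    {S A : Type*} [Fintype S] [Fintype A] [Nonempty S] [Nonempty A]
    (P : S → A → S → ℝ) (hP0 : ∀ s a s', 0 ≤ P s a s') (hP1 : ∀ s a, ∑ s', P s a s' = 1)
    (r : S → A → ℝ) (γ : ℝ) (hγ0 : 0 ≤ γ) (hγ1 : γ < 1)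
    (τ : ℝ) (hτ : 0 < τ)
    (πold πnew : S → A → ℝ)
    (hπold : ∀ s a, 0 < πold s a) (hπold1 : ∀ s, ∑ a, πold s a = 1)
    (hπnew : ∀ s a, 0 < πnew s a) (hπnew1 : ∀ s, ∑ a, πnew s a = 1)
    (Vold : S → ℝ) (Qold : S → A → ℝ)
    (hQold : ∀ s a, Qold s a = r s a + γ * ∑ s', P s a s' * Vold s')
    (hVold : ∀ s, Vold s = ∑ a, πold s a * (Qold s a - τ * Real.log (πold s a)))
    (Vnew : S → ℝ) (Qnew : S → A → ℝ)
    (hQnew : ∀ s a, Qnew s a = r s a + γ * ∑ s', P s a s' * Vnew s')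
    (hVnew : ∀ s, Vnew s = ∑ a, πnew s a * (Qnew s a - τ * Real.log (πnew s a)))
    (hKL : ∀ s, (∑ a, πnew s a * Real.log (πnew s a / boltzmann Qold τ s a))
              ≤ ∑ a, πold s a * Real.log (πold s a / boltzmann Qold τ s a)) :
    ∀ s a, Qold s a ≤ Qnew s a := by
  have hZ : ∀ s : S, 0 < ∑ b, Real.exp (Qold s b / τ) :=
    fun s => Finset.sum_pos (fun b _ => Real.exp_pos _) Finset.univ_nonempty
  have hlog : ∀ (s : S) (a : A) (x : ℝ), 0 < x →
      Real.log (x / boltzmann Qold τ s a)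
        = Real.log x - Qold s a / τ + Real.log (∑ b, Real.exp (Qold s b / τ)) := by
    intro s a x hx
    unfold boltzmann
    rw [div_div_eq_mul_div, Real.log_div (mul_pos hx (hZ s)).ne' (Real.exp_ne_zero _),
        Real.log_mul hx.ne' (hZ s).ne', Real.log_exp]
    ring
  have hsum : ∀ (s : S) (π : S → A → ℝ), (∀ s a, 0 < π s a) → (∀ s, ∑ a, π s a = 1) →
      ∑ a, π s a * Real.log (π s a / boltzmann Qold τ s a)
        = ∑ a, π s a * Real.log (π s a) - (∑ a, π s a * Qold s a) / τ
          + Real.log (∑ b, Real.exp (Qold s b / τ)) := by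
    intro s π hp hp1
    have : ∑ a, π s a * Real.log (π s a / boltzmann Qold τ s a)
        = ∑ a, (π s a * Real.log (π s a) - π s a * Qold s a / τ
            + π s a * Real.log (∑ b, Real.exp (Qold s b / τ))) := by
      refine Finset.sum_congr rfl fun a _ => ?_
      rw [hlog s a _ (hp s a)]; ring
    rw [this, Finset.sum_add_distrib, Finset.sum_sub_distrib, ← Finset.sum_div,
        ← Finset.sum_mul, hp1 s, one_mul]
  -- key per-state improvement of the soft evaluation of πnew w.r.t. Qold
  have hkey : ∀ s, Vold s ≤ ∑ a, πnew s a * (Qold s a - τ * Real.log (πnew s a)) := by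
    intro s
    have h1 := hKL s
    rw [hsum s πnew hπnew hπnew1, hsum s πold hπold hπold1] at h1
    have h2 : ∑ a, πnew s a * Real.log (πnew s a) - (∑ a, πnew s a * Qold s a) / τ
        ≤ ∑ a, πold s a * Real.log (πold s a) - (∑ a, πold s a * Qold s a) / τ := by
      linarith
    have h3 := mul_le_mul_of_nonneg_left h2 hτ.le
    rw [mul_sub, mul_sub, mul_div_cancel₀ _ hτ.ne', mul_div_cancel₀ _ hτ.ne'] at h3
    have e1 : ∑ a, πold s a * (Qold s a - τ * Real.log (πold s a))
        = ∑ a, πold s a * Qold s a - τ * ∑ a, πold s a * Real.log (πold s a) := by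
      rw [Finset.mul_sum, ← Finset.sum_sub_distrib]
      exact Finset.sum_congr rfl fun a _ => by ring
    have e2 : ∑ a, πnew s a * (Qold s a - τ * Real.log (πnew s a))
        = ∑ a, πnew s a * Qold s a - τ * ∑ a, πnew s a * Real.log (πnew s a) := by
      rw [Finset.mul_sum, ← Finset.sum_sub_distrib]
      exact Finset.sum_congr rfl fun a _ => by ring
    rw [hVold s, e1, e2]
    linarith
  have hQdiff : ∀ s a, Qnew s a - Qold s a = γ * ∑ s', P s a s' * (Vnew s' - Vold s') := by
    intro s a
    have e : ∑ s', P s a s' * (Vnew s' - Vold s')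
        = ∑ s', P s a s' * Vnew s' - ∑ s', P s a s' * Vold s' := by
      rw [← Finset.sum_sub_distrib]
      exact Finset.sum_congr rfl fun s' _ => by ring
    rw [hQnew, hQold, e]; ring
  obtain ⟨s0, -, hs0⟩ := Finset.exists_min_image Finset.univ (fun s => Vnew s - Vold s)
    Finset.univ_nonempty
  have hs0' : ∀ s, Vnew s0 - Vold s0 ≤ Vnew s - Vold s := fun s => hs0 s (mem_univ s)
  have hinner : ∀ s a, γ * (Vnew s0 - Vold s0) ≤ Qnew s a - Qold s a := by
    intro s a
    rw [hQdiff s a]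
    have : ∑ s', P s a s' * (Vnew s0 - Vold s0) ≤ ∑ s', P s a s' * (Vnew s' - Vold s') :=
      Finset.sum_le_sum fun s' _ => mul_le_mul_of_nonneg_left (hs0' s') (hP0 s a s')
    rw [← Finset.sum_mul, hP1 s a, one_mul] at this
    exact mul_le_mul_of_nonneg_left this hγ0
  have hbound : ∀ s, γ * (Vnew s0 - Vold s0) ≤ Vnew s - Vold s := by
    intro s
    have e3 : ∑ a, πnew s a * (Qnew s a - Qold s a)
        = Vnew s - ∑ a, πnew s a * (Qold s a - τ * Real.log (πnew s a)) := by
      rw [hVnew s, ← Finset.sum_sub_distrib]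
      exact Finset.sum_congr rfl fun a _ => by ring
    have h4 : ∑ a, πnew s a * (γ * (Vnew s0 - Vold s0))
        ≤ ∑ a, πnew s a * (Qnew s a - Qold s a) :=
      Finset.sum_le_sum fun a _ => mul_le_mul_of_nonneg_left (hinner s a) (hπnew s a).le
    rw [← Finset.sum_mul, hπnew1 s, one_mul] at h4
    have := hkey s
    linarith [e3 ▸ h4]
  have hm : 0 ≤ Vnew s0 - Vold s0 := by nlinarith [hbound s0]
  have hV : ∀ s, Vold s ≤ Vnew s := by
    intro s
    have := hbound s
    nlinarith [mul_nonneg hγ0 hm]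
  intro s a
  have : 0 ≤ Qnew s a - Qold s a := by
    rw [hQdiff s a]
    exact mul_nonneg hγ0 (Finset.sum_nonneg fun s' _ =>
      mul_nonneg (hP0 s a s') (by linarith [hV s']))
  linarith
end
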